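/- Let k be an integer with k > q/2 and let α ∈ (q/(2k), 1). Then ε^{−q/2} P(L_{αT} ≥ k) → 0 as ε → 0. -/

import Mathlib

open MeasureTheory ProbabilityTheory Filter Set
open scoped Classical

noncomputable section

/-- The space `S↓` of nonincreasing nonnegative sequences with total sum at most 1
(encoded by the condition that all partial sums are at most 1). -/
abbrev Sdown : Type := {s : ℕ → ℝ //
  (∀ i, s (i + 1) ≤ s i) ∧ (∀ i, 0 ≤ s i) ∧ ∀ n, ∑ i ∈ Finset.range n, s i ≤ 1}

/-- Index type for the whole family of random objects: one ratio sequence `ξ̃_u` per node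
`u` of the genealogical tree (nodes are encoded as lists, latest generation first, the
`i`-th child of `u` being `i :: u`), together with one uniform tag position per tag. -/
def FragIdx (q : ℕ) : Type := (List ℕ) ⊕ (Fin q)

/-- Codomains of the family of random objects. -/
def FragTgt (q : ℕ) : FragIdx q → Type
  | Sum.inl _ => Sdown
  | Sum.inr _ => ℝ

instance fragTgtMS (q : ℕ) : ∀ i : FragIdx q, MeasurableSpace (FragTgt q i)
  | Sum.inl _ => inferInstanceAs (MeasurableSpace Sdown)
  | Sum.inr _ => inferInstanceAs (MeasurableSpace ℝ)

/-- The combined family `(ξ̃_u)_u, (Y_k)_k` as a single indexed family. -/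
def fragFam {Ω : Type*} (q : ℕ) (xit : List ℕ → Ω → Sdown) (Y : Fin q → Ω → ℝ) :
    ∀ i : FragIdx q, Ω → FragTgt q i
  | Sum.inl u => xit u
  | Sum.inr k => Y k

/-- A conservative fragmentation chain with `q` tagged fragments: the ratio sequences
`ξ̃_u` are i.i.d. with law `ν`, the tag positions `Y_k` are i.i.d. uniform on `[0,1]`,
and the whole family is independent. -/
structure FragModel (Ω : Type*) [MeasurableSpace Ω] (P : Measure Ω) (q : ℕ)
    (ν : Measure Sdown) where
  xit : List ℕ → Ω → Sdown
  Y : Fin q → Ω → ℝ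
  meas_xit : ∀ u, Measurable (xit u)
  meas_Y : ∀ k, Measurable (Y k)
  law_xit : ∀ u, Measure.map (xit u) P = ν
  law_Y : ∀ k, Measure.map (Y k) P = volume.restrict (Set.Icc (0 : ℝ) 1)
  indep : iIndepFun (fragFam q xit Y) P

namespace FragModel

variable {Ω : Type*} [MeasurableSpace Ω] {P : Measure Ω} {q : ℕ} {ν : Measure Sdown}

/-- Fragment sizes: `ξ_∅ = 1`, `ξ_{ui} = ξ̃_{ui} ξ_u`. -/
def xi (M : FragModel Ω P q ν) : List ℕ → Ω → ℝ
  | [] => fun _ => 1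
  | i :: u => fun ω => (M.xit u ω).1 i * M.xi u ω

/-- Left endpoints: `l_∅ = 0`, `l_{ui} = l_u + ξ_u (ξ̃_{u1} + ⋯ + ξ̃_{u(i-1)})`. -/
def lpos (M : FragModel Ω P q ν) : List ℕ → Ω → ℝ
  | [] => fun _ => 0
  | i :: u => fun ω => M.lpos u ω + M.xi u ω * ∑ j ∈ Finset.range i, (M.xit u ω).1 j

/-- Tag sets: `A_u = {k : Y_k ∈ [l_u, l_u + ξ_u)}`. -/
def tagSet (M : FragModel Ω P q ν) (u : List ℕ) (ω : Ω) : Finset (Fin q) :=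
  Finset.univ.filter fun k => M.Y k ω ∈ Set.Ico (M.lpos u ω) (M.lpos u ω + M.xi u ω)

/-- `S_n^{(i)} = -log ξ_u` for the (a.s. unique) node `u` of generation `n` carrying
tag `i`. -/
def Sgen (M : FragModel Ω P q ν) (n : ℕ) (i : Fin q) (ω : Ω) : ℝ :=
  sInf {x | ∃ u : List ℕ, u.length = n ∧ i ∈ M.tagSet u ω ∧ x = -Real.log (M.xi u ω)}

/-- Residual lifetime of the fragment carrying tag `i`:
`B_t^{(i)} = inf {S_n^{(i)} : S_n^{(i)} > t} - t`. -/
def Bres (M : FragModel Ω P q ν) (t : ℝ) (i : Fin q) (ω : Ω) : ℝ :=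
  sInf {x | ∃ n : ℕ, x = M.Sgen n i ω ∧ t < x} - t

/-- The tree `𝒯₁`: nodes with at least one tag whose parent is still of size `≥ ε`,
together with the root. -/
def Tone (M : FragModel Ω P q ν) (ε : ℝ) (ω : Ω) : Set (List ℕ) :=
  {u | u ≠ [] ∧ M.tagSet u ω ≠ ∅ ∧ ε ≤ M.xi u.tail ω} ∪ {[]}

/-- Leaves of a subtree of the genealogical tree. -/
def leavesOf (T : Set (List ℕ)) : Set (List ℕ) := {u ∈ T | ∀ i : ℕ, (i :: u) ∉ T}

/-- The nodes of `𝒯₁` alive at time `t`: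
`S(t) = {u ∈ 𝒯₁ : -log ξ_{a(u)} ≤ t < -log ξ_u}`. -/
def Sliv (M : FragModel Ω P q ν) (ε t : ℝ) (ω : Ω) : Set (List ℕ) :=
  {u | u ∈ M.Tone ε ω ∧ -Real.log (M.xi u.tail ω) ≤ t ∧ t < -Real.log (M.xi u ω)}

/-- `L_t = ∑_{u ∈ S(t)} (#A_u - 1)`. -/
def Lsum (M : FragModel Ω P q ν) (ε t : ℝ) (ω : Ω) : ℝ :=
  ∑' u : List ℕ, if u ∈ M.Sliv ε t ω then ((M.tagSet u ω).card : ℝ) - 1 else 0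

/-- `∑_{u ∈ S(t)} 1_{#A_u = 1}`. -/
def Nsing (M : FragModel Ω P q ν) (ε t : ℝ) (ω : Ω) : ℝ :=
  ∑' u : List ℕ, if u ∈ M.Sliv ε t ω ∧ (M.tagSet u ω).card = 1 then (1 : ℝ) else 0

/-- The event `C_{k,l}(t)`. -/
def Ckl (M : FragModel Ω P q ν) (ε t : ℝ) (k l : ℕ) : Set Ω :=
  {ω | M.Nsing ε t ω = k ∧ M.Lsum ε t ω = l}

/-- The tree `𝒯₂`: nodes of `𝒯₁` whose parent carries at least two tags, together
with the root. -/
def Ttwo (M : FragModel Ω P q ν) (ε : ℝ) (ω : Ω) : Set (List ℕ) :=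
  {u | u ∈ M.Tone ε ω ∧ u ≠ [] ∧ 2 ≤ (M.tagSet u.tail ω).card} ∪ {[]}

/-- `ℒ₂`: leaves of `𝒯₂` carrying exactly one tag. -/
def Ltwo (M : FragModel Ω P q ν) (ε : ℝ) (ω : Ω) : Set (List ℕ) :=
  {u | u ∈ M.Ttwo ε ω ∧ (∀ i : ℕ, (i :: u) ∉ M.Ttwo ε ω) ∧ (M.tagSet u ω).card = 1}

/-- The σ-algebra `σ(ℒ₂)` generated by the random set `ℒ₂`. -/
def sigmaLtwo (M : FragModel Ω P q ν) (ε : ℝ) : MeasurableSpace Ω :=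
  MeasurableSpace.comap (fun ω => M.Ltwo ε ω)
    (@MeasurableSpace.pi (List ℕ) (fun _ => Prop) (fun _ => ⊤))

/-- The frozen fragments: `𝒰_ε = {u : ξ_{a(u)} ≥ ε > ξ_u}`. -/
def Ueps (M : FragModel Ω P q ν) (ε : ℝ) (ω : Ω) : Set (List ℕ) :=
  {u | ε ≤ M.xi u.tail ω ∧ M.xi u ω < ε}

/-- The empirical measure applied to `f` : `γ_T(f) = ∑_{u ∈ 𝒰_ε} ξ_u f(ξ_u/ε)`
(`T = -log ε`). -/
def gammaT (M : FragModel Ω P q ν) (ε : ℝ) (f : ℝ → ℝ) (ω : Ω) : ℝ :=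
  ∑' u : List ℕ, if u ∈ M.Ueps ε ω then M.xi u ω * f (M.xi u ω / ε) else 0

end FragModel

/-- The functional `η(f) = (1/μ) ∫₀^∞ E(f(Y-s) 1_{Y-s ≥ 0}) ds`, `Y ~ π`. -/
def etaF (π : Measure ℝ) (μ : ℝ) (f : ℝ → ℝ) : ℝ :=
  (1 / μ) * ∫ s in Set.Ici (0 : ℝ), (∫ y, Set.indicator (Set.Ici (0 : ℝ)) f (y - s) ∂π)

/-- Topological support of a measure. -/
def msupport {α : Type*} [TopologicalSpace α] [MeasurableSpace α] (m : Measure α) :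
    Set α := {x | ∀ U : Set α, IsOpen U → x ∈ U → m U ≠ 0}

/-- Membership in `ℬ⁰_sym(1)`: bounded, measurable, centered for `η`. -/
def memB0 (π : Measure ℝ) (μ : ℝ) (f : ℝ → ℝ) : Prop :=
  Measurable f ∧ (∃ C : ℝ, ∀ x, |f x| ≤ C) ∧ etaF π μ f = 0

/-- The symmetrized tensor product `(f₁ ⊗ ⋯ ⊗ f_q)_sym`. -/
def tensSym (q : ℕ) (f : Fin q → ℝ → ℝ) (x : Fin q → ℝ) : ℝ :=
  (1 / (Nat.factorial q : ℝ)) * ∑ σ : Equiv.Perm (Fin q), ∏ i, f (σ i) (x i)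

/-- `K₁(q) = ∑_{i=1}^q q!/(q-i)!`. -/
def K1 (q : ℕ) : ℝ := ∑ i ∈ Finset.Icc 1 q, (Nat.factorial q : ℝ) / (Nat.factorial (q - i))

/-!
On `{L_t ≥ k}`, the fragments alive at time `t` have length `< e^{-t}` and disjoint intervals,
and a fragment carrying `n` tags yields `n - 1` tags lying within `e^{-t}` of a partner tag
(its remaining one). So `k` tags sit within `e^{-t}` of partners outside the chosen set; as the
tags are independent and uniform, each such coincidence costs a factor `2e^{-t}`, whence
`P(L_t ≥ k) ≤ C e^{-kt} = C ε^{αk}` for `t = αT`, and `αk > q/2`.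
-/

open scoped Finset ENNReal

theorem Finset.exists_partnered_of_le_sum_card_sub_one {ι α : Type*} {F : Finset ι}
    {A : ι → Finset α} (hdisj : (F : Set ι).PairwiseDisjoint A) (hne : ∀ i ∈ F, (A i).Nonempty)
    {k : ℕ} (hk : k ≤ ∑ i ∈ F, (#(A i) - 1)) :
    ∃ (S : Finset α) (g : α → α), #S = k ∧
      ∀ s ∈ S, g s ∉ S ∧ ∃ i ∈ F, s ∈ A i ∧ g s ∈ A i := by
  rcases F.eq_empty_or_nonempty with rfl | ⟨i₀, hi₀⟩
  · exact ⟨∅, id, by simpa [eq_comm] using hk, by simp⟩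
  have : Nonempty ι := ⟨i₀⟩
  have : Nonempty α := ⟨(hne i₀ hi₀).choose⟩
  -- Keep one marked element `m i` in each block; every other element of the block gets
  -- `m i` as its partner.
  choose! m hm using hne
  set R := F.biUnion fun i => (A i).erase (m i)
  have hR : #R = ∑ i ∈ F, (#(A i) - 1) := by
    rw [Finset.card_biUnion]
    · exact Finset.sum_congr rfl fun i hi => Finset.card_erase_of_mem (hm i hi)
    · exact fun i hi j hj hij =>
        (hdisj hi hj hij).mono (Finset.erase_subset _ _) (Finset.erase_subset _ _)
  obtain ⟨S, hSR, hS⟩ := Finset.exists_subset_card_eq (hR ▸ hk)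
  choose! block hblock using fun s (hs : s ∈ R) => Finset.mem_biUnion.1 hs
  refine ⟨S, m ∘ block, hS, fun s hs => ⟨fun hgs => ?_, ?_⟩⟩
  · rw [Function.comp_apply] at hgs
    obtain ⟨hi, hsi⟩ := hblock s (hSR hs)
    obtain ⟨hj, hgsj⟩ := hblock _ (hSR hgs)
    have hsame : block (m (block s)) = block s := by
      by_contra hne
      exact Finset.disjoint_left.1 (hdisj hj hi hne) (Finset.mem_of_mem_erase hgsj)
        (hm _ hi)
    exact (Finset.mem_erase.1 hgsj).1 (by rw [hsame])
  · obtain ⟨hi, hsi⟩ := hblock s (hSR hs)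
    exact ⟨block s, hi, Finset.mem_of_mem_erase hsi, hm _ hi⟩

section Independence

variable {Ω : Type*} [MeasurableSpace Ω] {P : Measure Ω}

theorem ProbabilityTheory.iIndepFun.indepFun_update {ι β : Type*} [Fintype ι] [DecidableEq ι]
    [MeasurableSpace β] {f : ι → Ω → β} (hf : iIndepFun f P) (hmeas : ∀ i, Measurable (f i))
    (i : ι) (c : β) :
    IndepFun (fun ω => Function.update (fun j => f j ω) i c) (f i) P := by
  have hrest := hf.indepFun_finset (Finset.univ.erase i) {i} (by simp) hmeas
  have hφ : Measurable fun (v : ↥(Finset.univ.erase i) → β) (j : ι) =>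
      if h : j = i then c else v ⟨j, Finset.mem_erase.2 ⟨h, Finset.mem_univ j⟩⟩ := by
    refine measurable_pi_lambda _ fun j => ?_
    by_cases h : j = i
    · simp only [h, dite_true, measurable_const]
    · simp only [h, dite_false]
      exact measurable_pi_apply _
  have hψ : Measurable fun (v : ↥({i} : Finset ι) → β) => v ⟨i, Finset.mem_singleton_self i⟩ :=
    measurable_pi_apply _
  convert hrest.comp hφ hψ using 1
  · funext ω j
    by_cases h : j = i <;> simp [h]
  · rfl

theorem measure_preimage_inter_abs_sub_lt_le [IsProbabilityMeasure P] {β : Type*}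
    [MeasurableSpace β] {W : Ω → β} {X : Ω → ℝ} (hW : Measurable W) (hX : Measurable X)
    (hWX : IndepFun W X P) {δ : ℝ} {r : ℝ≥0∞} (hr : ∀ c, P (X ⁻¹' Ioo (c - δ) (c + δ)) ≤ r)
    {B : Set β} (hB : MeasurableSet B) {c : β → ℝ} (hc : Measurable c) :
    P (W ⁻¹' B ∩ {ω | |X ω - c (W ω)| < δ}) ≤ r * P (W ⁻¹' B) := by
  set D : Set (β × ℝ) := {p | p.1 ∈ B ∧ |p.2 - c p.1| < δ}
  have hD : MeasurableSet D :=
    (measurable_fst hB).inter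
      (measurableSet_lt (measurable_snd.sub (hc.comp measurable_fst)).abs measurable_const)
  have hslice : ∀ w, P.map X (Prod.mk w ⁻¹' D) ≤ B.indicator (fun _ => r) w := by
    intro w
    by_cases hw : w ∈ B
    · have : Prod.mk w ⁻¹' D = Ioo (c w - δ) (c w + δ) := by
        ext x
        simp only [D, mem_preimage, mem_ofPred_eq, hw, true_and, abs_sub_lt_iff, mem_Ioo]
        constructor <;> rintro ⟨h₁, h₂⟩ <;> constructor <;> linarith
      rw [this, Set.indicator_of_mem hw, Measure.map_apply hX measurableSet_Ioo]
      exact hr _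
    · simp [D, hw]
  calc P (W ⁻¹' B ∩ {ω | |X ω - c (W ω)| < δ})
      = ((P.map W).prod (P.map X)) D := by
        rw [← (indepFun_iff_map_prod_eq_prod_map_map hW.aemeasurable hX.aemeasurable).1 hWX,
          Measure.map_apply (hW.prodMk hX) hD]
        rfl
    _ ≤ ∫⁻ w, B.indicator (fun _ => r) w ∂(P.map W) := by
        rw [Measure.prod_apply hD]
        exact lintegral_mono hslice
    _ = r * P (W ⁻¹' B) := by rw [lintegral_indicator_const hB, Measure.map_apply hW hB]

theorem measure_biInter_abs_sub_lt_le {ι : Type*} [Fintype ι] [DecidableEq ι]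
    {Y : ι → Ω → ℝ} (hY : iIndepFun Y P) (hmeas : ∀ i, Measurable (Y i)) {δ : ℝ} {r : ℝ≥0∞}
    (hr : ∀ i c, P (Y i ⁻¹' Ioo (c - δ) (c + δ)) ≤ r) (g : ι → ι) (S : Finset ι)
    (hg : ∀ s ∈ S, g s ∉ S) :
    P (⋂ s ∈ S, {ω | |Y s ω - Y (g s) ω| < δ}) ≤ r ^ #S := by
  have := hY.isProbabilityMeasure
  induction S using Finset.induction_on with
  | empty => simp
  | @insert s₀ S hs₀ ih =>
    have hgS : ∀ s ∈ S, g s ∉ S := fun s hs hgs =>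
      hg s (Finset.mem_insert_of_mem hs) (Finset.mem_insert_of_mem hgs)
    have hne : ∀ s ∈ insert s₀ S, g s ≠ s₀ := fun s hs h =>
      hg s hs (h ▸ Finset.mem_insert_self s₀ S)
    -- Freezing `Y s₀` to `0` leaves the other coordinates, which carry the events indexed
    -- by `S`, independent of `Y s₀`.
    set W : Ω → ι → ℝ := fun ω => Function.update (fun j => Y j ω) s₀ 0
    set B : Set (ι → ℝ) := ⋂ s ∈ S, {v | |v s - v (g s)| < δ}
    have hB : MeasurableSet B := MeasurableSet.biInter S.countable_toSet fun s _ =>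
      measurableSet_lt ((measurable_pi_apply s).sub (measurable_pi_apply (g s))).abs
        measurable_const
    have hWB : W ⁻¹' B = ⋂ s ∈ S, {ω | |Y s ω - Y (g s) ω| < δ} := by
      ext ω
      simp only [B, W, mem_preimage, mem_iInter, mem_ofPred_eq]
      refine forall₂_congr fun s hs => ?_
      rw [Function.update_of_ne (ne_of_mem_of_not_mem hs hs₀),
        Function.update_of_ne (hne s (Finset.mem_insert_of_mem hs))]
    have hevent : (⋂ s ∈ insert s₀ S, {ω | |Y s ω - Y (g s) ω| < δ})
        = W ⁻¹' B ∩ {ω | |Y s₀ ω - W ω (g s₀)| < δ} := by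
      rw [Finset.set_biInter_insert, hWB, inter_comm]
      congr! 3 with ω
      simp only [W, Function.update_of_ne (hne s₀ (Finset.mem_insert_self s₀ S))]
    have hWm : Measurable W := measurable_pi_lambda _ fun j => by
      by_cases h : j = s₀
      · simp only [W, h, Function.update_self, measurable_const]
      · simp only [W, Function.update_of_ne h]
        exact hmeas j
    calc P (⋂ s ∈ insert s₀ S, {ω | |Y s ω - Y (g s) ω| < δ})
        ≤ r * P (W ⁻¹' B) := by
          rw [hevent]
          exact measure_preimage_inter_abs_sub_lt_le hWm (hmeas s₀)
            (hY.indepFun_update hmeas s₀ 0) (hr s₀) hB (measurable_pi_apply (g s₀))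
      _ ≤ r * r ^ #S := by
          rw [hWB]
          gcongr
          exact ih hgS
      _ = r ^ #(insert s₀ S) := by rw [Finset.card_insert_of_notMem hs₀, pow_succ']

end Independence

theorem Sdown.le_one (s : Sdown) (i : ℕ) : s.1 i ≤ 1 :=
  (Finset.single_le_sum (fun j _ => s.2.2.1 j) (Finset.self_mem_range_succ i)).trans
    (s.2.2.2 (i + 1))

namespace FragModel

variable {Ω : Type*} [MeasurableSpace Ω] {P : Measure Ω} {q : ℕ} {ν : Measure Sdown}
  (M : FragModel Ω P q ν) {ε t : ℝ} {ω : Ω}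

def nodeInterval (u : List ℕ) (ω : Ω) : Set ℝ := Ico (M.lpos u ω) (M.lpos u ω + M.xi u ω)

theorem mem_tagSet {u : List ℕ} {i : Fin q} :
    i ∈ M.tagSet u ω ↔ M.Y i ω ∈ M.nodeInterval u ω := by
  simp [tagSet, nodeInterval]

theorem xi_nonneg (u : List ℕ) (ω : Ω) : 0 ≤ M.xi u ω := by
  induction u with
  | nil => exact zero_le_one
  | cons i u ih => exact mul_nonneg ((M.xit u ω).2.2.1 i) ih

theorem xi_le_xi_of_isSuffix {u v : List ℕ} (h : u <:+ v) : M.xi v ω ≤ M.xi u ω := by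
  obtain ⟨w, rfl⟩ := h
  induction w with
  | nil => exact le_rfl
  | cons i w ih =>
    exact (mul_le_of_le_one_left (M.xi_nonneg _ ω) (Sdown.le_one _ i)).trans ih

theorem nodeInterval_cons_subset (i : ℕ) (u : List ℕ) (ω : Ω) :
    M.nodeInterval (i :: u) ω ⊆ M.nodeInterval u ω := by
  have hξ := M.xi_nonneg u ω
  have hsum : 0 ≤ ∑ j ∈ Finset.range i, (M.xit u ω).1 j :=
    Finset.sum_nonneg fun j _ => (M.xit u ω).2.2.1 j
  have hle : M.xi u ω * ∑ j ∈ Finset.range (i + 1), (M.xit u ω).1 j ≤ M.xi u ω :=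
    mul_le_of_le_one_right hξ ((M.xit u ω).2.2.2 (i + 1))
  rw [Finset.sum_range_succ, mul_add] at hle
  simp only [nodeInterval, lpos, xi]
  exact Ico_subset_Ico (by nlinarith) (by nlinarith)

theorem nodeInterval_append_subset (w u : List ℕ) (ω : Ω) :
    M.nodeInterval (w ++ u) ω ⊆ M.nodeInterval u ω := by
  induction w with
  | nil => exact subset_rfl
  | cons i w ih => exact (M.nodeInterval_cons_subset i _ ω).trans ih

theorem disjoint_nodeInterval_cons_of_lt {i j : ℕ} (hij : i < j) (u : List ℕ) (ω : Ω) :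
    Disjoint (M.nodeInterval (i :: u) ω) (M.nodeInterval (j :: u) ω) := by
  have hle : M.xi u ω * ∑ l ∈ Finset.range (i + 1), (M.xit u ω).1 l
      ≤ M.xi u ω * ∑ l ∈ Finset.range j, (M.xit u ω).1 l :=
    mul_le_mul_of_nonneg_left
      (Finset.sum_le_sum_of_subset_of_nonneg (Finset.range_subset_range.2 hij)
        fun l _ _ => (M.xit u ω).2.2.1 l)
      (M.xi_nonneg u ω)
  rw [Finset.sum_range_succ, mul_add] at hle
  rw [Set.disjoint_left]
  intro x hxi hxj
  simp only [nodeInterval, lpos, xi, mem_Ico] at hxi hxj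
  nlinarith

theorem disjoint_nodeInterval_cons {i j : ℕ} (hij : i ≠ j) (u : List ℕ) (ω : Ω) :
    Disjoint (M.nodeInterval (i :: u) ω) (M.nodeInterval (j :: u) ω) := by
  rcases hij.lt_or_gt with h | h
  · exact M.disjoint_nodeInterval_cons_of_lt h u ω
  · exact (M.disjoint_nodeInterval_cons_of_lt h u ω).symm

theorem isSuffix_or_isSuffix_of_mem_nodeInterval {u v : List ℕ} {x : ℝ}
    (hu : x ∈ M.nodeInterval u ω) (hv : x ∈ M.nodeInterval v ω) : u <:+ v ∨ v <:+ u := by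
  induction u with
  | nil => exact Or.inl List.nil_suffix
  | cons i u ih =>
    rcases ih (M.nodeInterval_cons_subset i u ω hu) with ⟨w, rfl⟩ | h
    · rcases w.eq_nil_or_concat with rfl | ⟨w, j, rfl⟩
      · exact Or.inr (List.suffix_cons i u)
      · have hv' : x ∈ M.nodeInterval (j :: u) ω := by
          simp only [List.concat_eq_append, List.append_assoc, List.cons_append,
            List.nil_append] at hv
          exact M.nodeInterval_append_subset w _ ω hv
        obtain rfl : j = i := by
          by_contra hji
          exact Set.disjoint_left.1 (M.disjoint_nodeInterval_cons hji u ω) hv' hu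
        exact Or.inl ⟨w, by simp⟩
    · exact Or.inr (h.trans (List.suffix_cons i u))

theorem xi_pos_of_mem_Sliv (ht : 0 ≤ t) {u : List ℕ} (hu : u ∈ M.Sliv ε t ω) :
    0 < M.xi u ω := by
  refine (M.xi_nonneg u ω).lt_of_ne fun h => ?_
  have := hu.2.2
  rw [← h, Real.log_zero] at this
  linarith

theorem xi_lt_exp_of_mem_Sliv (ht : 0 ≤ t) {u : List ℕ} (hu : u ∈ M.Sliv ε t ω) :
    M.xi u ω < Real.exp (-t) :=
  (Real.log_lt_iff_lt_exp (M.xi_pos_of_mem_Sliv ht hu)).1 (by linarith [hu.2.2])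

theorem exp_le_xi_tail_of_mem_Sliv (ht : 0 ≤ t) {u : List ℕ} (hu : u ∈ M.Sliv ε t ω) :
    Real.exp (-t) ≤ M.xi u.tail ω := by
  have hpos : 0 < M.xi u.tail ω :=
    (M.xi_pos_of_mem_Sliv ht hu).trans_le (M.xi_le_xi_of_isSuffix (List.tail_suffix u))
  exact (Real.le_log_iff_exp_le hpos).1 (by linarith [hu.2.1])

theorem tagSet_nonempty_of_mem_Sliv {u : List ℕ} (hu : u ∈ M.Sliv ε t ω) :
    (M.tagSet u ω).Nonempty := by
  rcases hu.1 with h | rfl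
  · exact Finset.nonempty_iff_ne_empty.2 h.2.1
  · have := hu.2
    simp only [List.tail_nil, xi, Real.log_one, neg_zero] at this
    exact absurd this.1 (not_le.2 this.2)

/-- A live node cannot be a strict ancestor of another one: the ancestor is already smaller
than `e^{-t}`, while the descendant's parent is not. -/
theorem not_isSuffix_of_mem_Sliv (ht : 0 ≤ t) {u v : List ℕ} (hu : u ∈ M.Sliv ε t ω)
    (hv : v ∈ M.Sliv ε t ω) (huv : u ≠ v) : ¬ u <:+ v := by
  rintro ⟨w, rfl⟩
  obtain ⟨i, w, rfl⟩ := List.exists_cons_of_ne_nil fun hw : w = [] => huv (by simp [hw])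
  have hparent := M.exp_le_xi_tail_of_mem_Sliv ht hv
  rw [List.cons_append, List.tail_cons] at hparent
  linarith [M.xi_lt_exp_of_mem_Sliv ht hu,
    M.xi_le_xi_of_isSuffix (ω := ω) (List.suffix_append w u)]

theorem pairwiseDisjoint_tagSet_Sliv (ht : 0 ≤ t) :
    (M.Sliv ε t ω).PairwiseDisjoint (M.tagSet · ω) := by
  intro u hu v hv huv
  refine Finset.disjoint_left.2 fun i hiu hiv => ?_
  rcases M.isSuffix_or_isSuffix_of_mem_nodeInterval (M.mem_tagSet.1 hiu)
    (M.mem_tagSet.1 hiv) with h | h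
  · exact M.not_isSuffix_of_mem_Sliv ht hu hv huv h
  · exact M.not_isSuffix_of_mem_Sliv ht hv hu huv.symm h

theorem finite_Sliv (ht : 0 ≤ t) : (M.Sliv ε t ω).Finite := by
  refine Set.Finite.of_finite_image (f := (M.tagSet · ω)) (Set.toFinite _)
    fun u hu v hv huv => ?_
  by_contra hne
  have hdisj := M.pairwiseDisjoint_tagSet_Sliv ht hu hv hne
  simp only [Function.onFun] at huv hdisj
  rw [huv, disjoint_self, Finset.bot_eq_empty] at hdisj
  exact (M.tagSet_nonempty_of_mem_Sliv hv).ne_empty hdisj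

theorem Lsum_eq_sum (ht : 0 ≤ t) :
    M.Lsum ε t ω
      = ∑ u ∈ (M.finite_Sliv (ε := ε) (ω := ω) ht).toFinset, ((#(M.tagSet u ω) - 1 : ℕ) : ℝ) := by
  rw [Lsum, tsum_eq_sum (s := (M.finite_Sliv ht).toFinset)]
  · refine Finset.sum_congr rfl fun u hu => ?_
    rw [Set.Finite.mem_toFinset] at hu
    rw [if_pos hu, Nat.cast_sub (M.tagSet_nonempty_of_mem_Sliv hu).card_pos, Nat.cast_one]
  · intro u hu
    rw [Set.Finite.mem_toFinset] at hu
    exact if_neg hu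

theorem exists_close_tags_of_le_Lsum (ht : 0 ≤ t) {k : ℕ} (hL : (k : ℝ) ≤ M.Lsum ε t ω) :
    ∃ (S : Finset (Fin q)) (g : Fin q → Fin q), #S = k ∧
      ∀ s ∈ S, g s ∉ S ∧ |M.Y s ω - M.Y (g s) ω| < Real.exp (-t) := by
  rw [M.Lsum_eq_sum ht, ← Nat.cast_sum, Nat.cast_le] at hL
  obtain ⟨S, g, hS, hg⟩ := Finset.exists_partnered_of_le_sum_card_sub_one
    (by simpa using M.pairwiseDisjoint_tagSet_Sliv ht)
    (fun u hu => M.tagSet_nonempty_of_mem_Sliv ((Set.Finite.mem_toFinset _).1 hu)) hL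
  refine ⟨S, g, hS, fun s hs => ⟨(hg s hs).1, ?_⟩⟩
  obtain ⟨u, hu, hsu, hgu⟩ := (hg s hs).2
  have hlen := M.xi_lt_exp_of_mem_Sliv ht ((Set.Finite.mem_toFinset _).1 hu)
  rw [mem_tagSet] at hsu hgu
  simp only [nodeInterval, mem_Ico] at hsu hgu
  rw [abs_sub_lt_iff]
  constructor <;> linarith

theorem iIndepFun_Y : iIndepFun M.Y P :=
  M.indep.precomp (g := Sum.inr) Sum.inr_injective

theorem measure_Y_mem_Ioo_le (i : Fin q) (c δ : ℝ) :
    P (M.Y i ⁻¹' Ioo (c - δ) (c + δ)) ≤ ENNReal.ofReal (2 * δ) := by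
  rw [← Measure.map_apply (M.meas_Y i) measurableSet_Ioo, M.law_Y]
  refine (Measure.restrict_apply_le _ _).trans_eq ?_
  rw [Real.volume_Ioo]
  ring_nf

theorem measure_Lsum_ge_le (ht : 0 ≤ t) (k : ℕ) :
    P {ω | (k : ℝ) ≤ M.Lsum ε t ω}
      ≤ Fintype.card (Finset (Fin q) × (Fin q → Fin q))
        * ENNReal.ofReal (2 * Real.exp (-t)) ^ k := by
  set E : Finset (Fin q) × (Fin q → Fin q) → Set Ω :=
    fun p => ⋂ s ∈ p.1, {ω | |M.Y s ω - M.Y (p.2 s) ω| < Real.exp (-t)}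
  set good := Finset.univ.filter fun p : Finset (Fin q) × (Fin q → Fin q) =>
    #p.1 = k ∧ ∀ s ∈ p.1, p.2 s ∉ p.1
  have hcover : {ω | (k : ℝ) ≤ M.Lsum ε t ω} ⊆ ⋃ p ∈ good, E p := by
    intro ω hω
    obtain ⟨S, g, hS, hg⟩ := M.exists_close_tags_of_le_Lsum ht hω
    exact mem_biUnion (x := (S, g))
      (Finset.mem_filter.2 ⟨Finset.mem_univ _, hS, fun s hs => (hg s hs).1⟩)
      (mem_iInter₂.2 fun s hs => (hg s hs).2)
  calc P {ω | (k : ℝ) ≤ M.Lsum ε t ω}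
      ≤ ∑ p ∈ good, P (E p) := (measure_mono hcover).trans (measure_biUnion_finset_le _ _)
    _ ≤ #good • ENNReal.ofReal (2 * Real.exp (-t)) ^ k := by
        refine Finset.sum_le_card_nsmul _ _ _ fun p hp => ?_
        obtain ⟨hcard, hpartner⟩ := (Finset.mem_filter.1 hp).2
        rw [← hcard]
        exact measure_biInter_abs_sub_lt_le M.iIndepFun_Y M.meas_Y
          (fun i c => M.measure_Y_mem_Ioo_le i c _) p.2 p.1 hpartner
    _ ≤ _ := by
        rw [nsmul_eq_mul]
        gcongr
        exact_mod_cast Finset.card_le_univ good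

theorem toReal_measure_Lsum_ge_le {α : ℝ} (hα : 0 ≤ α) (hε : ε ∈ Ioo 0 1) (k : ℕ) :
    (P {ω | (k : ℝ) ≤ M.Lsum ε (α * -Real.log ε) ω}).toReal
      ≤ Fintype.card (Finset (Fin q) × (Fin q → Fin q)) * 2 ^ k * ε ^ (α * k) := by
  have ht : 0 ≤ α * -Real.log ε :=
    mul_nonneg hα (neg_nonneg.2 (Real.log_nonpos hε.1.le hε.2.le))
  have hexp : Real.exp (-(α * -Real.log ε)) = ε ^ α := by
    rw [Real.rpow_def_of_pos hε.1]
    ring_nf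
  refine (ENNReal.toReal_mono (by finiteness) (M.measure_Lsum_ge_le ht k)).trans_eq ?_
  rw [hexp, ENNReal.toReal_mul, ENNReal.toReal_pow, ENNReal.toReal_natCast,
    ENNReal.toReal_ofReal (mul_nonneg zero_le_two (Real.rpow_nonneg hε.1.le _)), mul_pow,
    ← Real.rpow_natCast (ε ^ α), ← Real.rpow_mul hε.1.le]
  ring

end FragModel

theorem stmt9_general
    {Ω : Type*} [MeasurableSpace Ω] (P : Measure Ω)
    (ν : Measure Sdown)
    (q : ℕ)
    (M : FragModel Ω P q ν)
    (k : ℕ) (hk : (q : ℝ) / 2 < k)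
    (α : ℝ) (hα : α ∈ Set.Ioo ((q : ℝ) / (2 * k)) 1) :
    Tendsto (fun ε : ℝ =>
        ε ^ (-(q : ℝ) / 2) *
          (P {ω | (k : ℝ) ≤ M.Lsum ε (α * (-Real.log ε)) ω}).toReal)
      (nhdsWithin 0 (Set.Ioo 0 1)) (nhds 0) := by
  obtain ⟨hαk, -⟩ := hα
  have hk0 : (0 : ℝ) < k := (by positivity : (0 : ℝ) ≤ q / 2).trans_lt hk
  have hα0 : 0 < α := (by positivity : (0 : ℝ) ≤ q / (2 * k)).trans_lt hαk
  have hexponent : 0 < α * k - q / 2 := by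
    rw [div_lt_iff₀ (by positivity)] at hαk
    linarith
  set C : ℝ := Fintype.card (Finset (Fin q) × (Fin q → Fin q)) * 2 ^ k
  have hlim :
      Tendsto (fun ε : ℝ => C * ε ^ (α * k - q / 2)) (nhdsWithin 0 (Ioo 0 1)) (nhds 0) := by
    simpa [Real.zero_rpow hexponent.ne'] using
      (((Real.continuousAt_rpow_const 0 _ (Or.inr hexponent.le)).tendsto.const_mul C).mono_left
        nhdsWithin_le_nhds)
  refine squeeze_zero' (eventually_nhdsWithin_of_forall fun ε hε =>
      mul_nonneg (Real.rpow_nonneg hε.1.le _) ENNReal.toReal_nonneg)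
    (eventually_nhdsWithin_of_forall fun ε hε => ?_) hlim
  calc ε ^ (-(q : ℝ) / 2) * (P {ω | (k : ℝ) ≤ M.Lsum ε (α * (-Real.log ε)) ω}).toReal
      ≤ ε ^ (-(q : ℝ) / 2) * (C * ε ^ (α * k)) :=
        mul_le_mul_of_nonneg_left (M.toReal_measure_Lsum_ge_le hα0.le hε k)
          (Real.rpow_nonneg hε.1.le _)
    _ = C * ε ^ (α * k - q / 2) := by
        rw [sub_eq_add_neg, Real.rpow_add hε.1, neg_div]
        ring

/-- `ε^{-q/2} P(L_{αT} ≥ k) → 0` as `ε → 0`, for `k > q/2` and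
`α ∈ (q/(2k), 1)`. -/
theorem stmt9
    {Ω : Type*} [MeasurableSpace Ω] (P : Measure Ω) [IsProbabilityMeasure P]
    (ν : Measure Sdown) [IsProbabilityMeasure ν]
    (hν1 : ν {s : Sdown | s.1 0 ∈ Set.Ioo 0 1} = 1)
    (hνcons : ν {s : Sdown | (∑' i, s.1 i) = 1} = 1)
    (q : ℕ) (hq : 0 < q)
    (M : FragModel Ω P q ν)
    (π : Measure ℝ) [IsProbabilityMeasure π]
    (hπpos : π (Set.Iic 0) = 0)
    (hπν : ∀ f : ℝ → ℝ, Measurable f → (∃ C : ℝ, ∀ x, |f x| ≤ C) →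
      ∫ s, (∑' i, s.1 i * f (s.1 i)) ∂ν = ∫ x, f (Real.exp (-x)) ∂π)
    (a b : ℝ) (ha : 0 < a) (hab : a < b) (hsupp : msupport π = Set.Icc a b)
    (k : ℕ) (hk : (q : ℝ) / 2 < k)
    (α : ℝ) (hα : α ∈ Set.Ioo ((q : ℝ) / (2 * k)) 1) :
    Tendsto (fun ε : ℝ =>
        ε ^ (-(q : ℝ) / 2) *
          (P {ω | (k : ℝ) ≤ M.Lsum ε (α * (-Real.log ε)) ω}).toReal)
      (nhdsWithin 0 (Set.Ioo 0 1)) (nhds 0) :=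
  stmt9_general P ν q M k hk α hα

end
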